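/- arXiv:2006.02274 — 4 statements merged into one kernel-verified Lean document; each statement's English description precedes it below -/
import Mathlib

section
/- For all 0 ≤ s ≤ t ≤ T and all w ∈ ℝ^N one has exp(−c_*(t−s)) · wᵀM(s)w ≤ wᵀM(t)w ≤ exp(c_*(t−s)) · wᵀM(s)w; in particular the time-dependent norms ‖·‖_{M(t)} at different times are equivalent with constants controlled by exp(c_*T). (Norm equivalence in time for the time-dependent mass matrix, used in the stability proof.) -/
open Matrix Set

/-- The quadratic form `zᵀ P z` associated with a square matrix `P`. -/
def qf {N : ℕ} (P : Matrix (Fin N) (Fin N) ℝ) (z : Fin N → ℝ) : ℝ :=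
  z ⬝ᵥ P.mulVec z

/-- The (semi-)norm `‖z‖_P = (zᵀ P z)^{1/2}` induced by a matrix `P`. -/
noncomputable def mnorm {N : ℕ} (P : Matrix (Fin N) (Fin N) ℝ) (z : Fin N → ℝ) : ℝ :=
  Real.sqrt (qf P z)

/-- Norm equivalence in time for the time-dependent mass matrix:
`exp(−c_*(t−s)) · wᵀM(s)w ≤ wᵀM(t)w ≤ exp(c_*(t−s)) · wᵀM(s)w` for `0 ≤ s ≤ t ≤ T`. -/
theorem stmt1 {N : ℕ} (hN : 1 ≤ N) {T : ℝ} (hT : 0 < T)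
    (M M' : ℝ → Matrix (Fin N) (Fin N) ℝ)
    (hM : ∀ t ∈ Icc (0:ℝ) T, ∀ (i j : Fin N), HasDerivAt (fun s => M s i j) (M' t i j) t)
    (hM'c : ∀ (i j : Fin N), ContinuousOn (fun s => M' s i j) (Icc (0:ℝ) T))
    (hMpd : ∀ t ∈ Icc (0:ℝ) T, (M t).PosDef)
    (cstar : ℝ) (hcstar : 0 < cstar)
    (hMd : ∀ t ∈ Icc (0:ℝ) T, ∀ w z : Fin N → ℝ,
        |w ⬝ᵥ (M' t).mulVec z| ≤ cstar * mnorm (M t) w * mnorm (M t) z) :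
    ∀ s t : ℝ, 0 ≤ s → s ≤ t → t ≤ T → ∀ w : Fin N → ℝ,
      Real.exp (-(cstar * (t - s))) * qf (M s) w ≤ qf (M t) w ∧
      qf (M t) w ≤ Real.exp (cstar * (t - s)) * qf (M s) w := by
  intro s t hs hst htT w
  have hsub : Icc s t ⊆ Icc (0:ℝ) T := Icc_subset_Icc hs htT
  set F : ℝ → ℝ := fun τ => qf (M τ) w with hFdef
  set D : ℝ → ℝ := fun τ => w ⬝ᵥ (M' τ).mulVec w with hDdef
  -- derivative of F
  have hF : ∀ τ ∈ Icc (0:ℝ) T, HasDerivAt F (D τ) τ := by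
    intro τ hτ
    have : HasDerivAt (fun σ => ∑ i, w i * ∑ j, M σ i j * w j)
        (∑ i, w i * ∑ j, M' τ i j * w j) τ := by
      apply HasDerivAt.fun_sum
      intro i _
      exact ((HasDerivAt.fun_sum fun j _ => (hM τ hτ i j).mul_const (w j))).const_mul (w i)
    convert this using 1 <;>
      simp [hFdef, hDdef, qf, dotProduct, Matrix.mulVec, Finset.mul_sum]
  -- nonnegativity of F
  have hFnn : ∀ τ ∈ Icc (0:ℝ) T, 0 ≤ F τ := by
    intro τ hτ
    simpa [hFdef, qf] using (hMpd τ hτ).posSemidef.dotProduct_mulVec_nonneg w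
  -- bound on D
  have hDb : ∀ τ ∈ Icc (0:ℝ) T, |D τ| ≤ cstar * F τ := by
    intro τ hτ
    have := hMd τ hτ w w
    have h : cstar * mnorm (M τ) w * mnorm (M τ) w = cstar * F τ := by
      rw [mul_assoc, mnorm, Real.mul_self_sqrt (hFnn τ hτ)]
    rw [h] at this; exact this
  -- exp(c τ) * F τ is monotone on [s,t]
  have hmono : MonotoneOn (fun τ => Real.exp (cstar * τ) * F τ) (Icc s t) := by
    apply monotoneOn_of_deriv_nonneg (convex_Icc s t)
    · exact ContinuousOn.mul (Real.continuous_exp.comp (continuous_const.mul continuous_id)).continuousOn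
        (fun τ hτ => ((hF τ (hsub hτ)).continuousAt).continuousWithinAt)
    · intro τ hτ
      have hτ' : τ ∈ Icc (0:ℝ) T := hsub (interior_subset hτ)
      exact (((Real.hasDerivAt_exp _).comp τ ((hasDerivAt_id τ).const_mul cstar)).mul
        (hF τ hτ')).differentiableAt.differentiableWithinAt
    · intro τ hτ
      rw [interior_Icc] at hτ
      have hτ' : τ ∈ Icc (0:ℝ) T := hsub ⟨hτ.1.le, hτ.2.le⟩
      have hd : HasDerivAt (fun τ => Real.exp (cstar * τ) * F τ)
          ((Real.exp (cstar * τ) * (cstar * 1)) * F τ + Real.exp (cstar * τ) * D τ) τ :=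
        (((Real.hasDerivAt_exp _).comp τ ((hasDerivAt_id τ).const_mul cstar)).mul (hF τ hτ'))
      rw [hd.deriv]
      have h1 : -(cstar * F τ) ≤ D τ := neg_le_of_abs_le (hDb τ hτ')
      have h2 : (0:ℝ) < Real.exp (cstar * τ) := Real.exp_pos _
      nlinarith [hFnn τ hτ']
  -- exp(-c τ) * F τ is antitone on [s,t]
  have hanti : AntitoneOn (fun τ => Real.exp (-(cstar * τ)) * F τ) (Icc s t) := by
    apply antitoneOn_of_deriv_nonpos (convex_Icc s t)
    · exact ContinuousOn.mul (Real.continuous_exp.comp (continuous_const.mul continuous_id).neg).continuousOn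
        (fun τ hτ => ((hF τ (hsub hτ)).continuousAt).continuousWithinAt)
    · intro τ hτ
      have hτ' : τ ∈ Icc (0:ℝ) T := hsub (interior_subset hτ)
      exact (((Real.hasDerivAt_exp _).comp τ (((hasDerivAt_id τ).const_mul cstar).neg)).mul
        (hF τ hτ')).differentiableAt.differentiableWithinAt
    · intro τ hτ
      rw [interior_Icc] at hτ
      have hτ' : τ ∈ Icc (0:ℝ) T := hsub ⟨hτ.1.le, hτ.2.le⟩
      have hd : HasDerivAt (fun τ => Real.exp (-(cstar * τ)) * F τ)
          ((Real.exp (-(cstar * τ)) * (-(cstar * 1))) * F τ + Real.exp (-(cstar * τ)) * D τ) τ :=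
        (((Real.hasDerivAt_exp _).comp τ (((hasDerivAt_id τ).const_mul cstar).neg)).mul (hF τ hτ'))
      rw [hd.deriv]
      have h1 : D τ ≤ cstar * F τ := le_of_abs_le (hDb τ hτ')
      have h2 : (0:ℝ) < Real.exp (-(cstar * τ)) := Real.exp_pos _
      nlinarith [hFnn τ hτ']
  have hsmem : s ∈ Icc s t := ⟨le_refl s, hst⟩
  have htmem : t ∈ Icc s t := ⟨hst, le_refl t⟩
  have hg := hmono hsmem htmem hst
  have hh := hanti hsmem htmem hst
  simp only at hg hh
  constructor
  · -- exp(-(c(t-s))) * F s ≤ F t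
    have key : Real.exp (cstar * s) * F s ≤ Real.exp (cstar * t) * F t := hg
    have : Real.exp (-(cstar * (t - s))) = Real.exp (cstar * s) / Real.exp (cstar * t) := by
      rw [← Real.exp_sub]; ring_nf
    rw [this, div_mul_eq_mul_div, div_le_iff₀ (Real.exp_pos _)]
    linarith [key]
  · -- F t ≤ exp(c(t-s)) * F s
    have key : Real.exp (-(cstar * t)) * F t ≤ Real.exp (-(cstar * s)) * F s := hh
    have he : Real.exp (cstar * (t - s)) = Real.exp (-(cstar * s)) / Real.exp (-(cstar * t)) := by
      rw [← Real.exp_sub]; ring_nf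
    rw [he, div_mul_eq_mul_div, le_div_iff₀ (Real.exp_pos _)]
    linarith [key]
end

section
/- For all t ∈ [0,T] the following energy identity holds: (1/2)·(d/dt)(‖e_u(t)‖_{A(t)}²) + ‖e_w(t)‖_{A(t)}² = (1/2)·e_u(t)ᵀA'(t)e_u(t) − e_w(t)ᵀM'(t)e_u(t) + e_w(t)ᵀF(t) − e_u'(t)ᵀG(t) − e_w(t)ᵀM(t)d_u(t) + e_u'(t)ᵀM(t)d_w(t) − e_u'(t)ᵀϑ. (Obtained by testing the first error equation with e_w and the second with e_u' and subtracting; the mixed term e_wᵀM(t)e_u' cancels, exploiting the anti-symmetric structure of the system.) -/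
open Matrix Set

/-- Common hypotheses on the error equations of the semi-discrete Cahn–Hilliard-type
system: `M`, `A` are `C¹` families of matrices, `M(t)` is symmetric positive definite,
`A(t)` is symmetric positive semidefinite, the functions `e_u, e_w, d_u, d_w, F, G` are
`C¹` (with the indicated derivatives), and the two error equations hold on `[0, T]`. -/
def CHBasic {N : ℕ} (T : ℝ)
    (M A M' A' : ℝ → Matrix (Fin N) (Fin N) ℝ)
    (eu ew eu' ew' du dw du' dw' F G F' G' : ℝ → Fin N → ℝ)
    (ϑ : Fin N → ℝ) : Prop :=
  (∀ t ∈ Icc (0:ℝ) T, ∀ (i j : Fin N), HasDerivAt (fun s => M s i j) (M' t i j) t) ∧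
  (∀ t ∈ Icc (0:ℝ) T, ∀ (i j : Fin N), HasDerivAt (fun s => A s i j) (A' t i j) t) ∧
  (∀ (i j : Fin N), ContinuousOn (fun s => M' s i j) (Icc (0:ℝ) T)) ∧
  (∀ (i j : Fin N), ContinuousOn (fun s => A' s i j) (Icc (0:ℝ) T)) ∧
  (∀ t ∈ Icc (0:ℝ) T, (M t).PosDef) ∧
  (∀ t ∈ Icc (0:ℝ) T, (A t).PosSemidef) ∧
  (∀ t ∈ Icc (0:ℝ) T, HasDerivAt eu (eu' t) t) ∧
  (∀ t ∈ Icc (0:ℝ) T, HasDerivAt ew (ew' t) t) ∧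
  (∀ t ∈ Icc (0:ℝ) T, HasDerivAt du (du' t) t) ∧
  (∀ t ∈ Icc (0:ℝ) T, HasDerivAt dw (dw' t) t) ∧
  (∀ t ∈ Icc (0:ℝ) T, HasDerivAt F (F' t) t) ∧
  (∀ t ∈ Icc (0:ℝ) T, HasDerivAt G (G' t) t) ∧
  ContinuousOn eu' (Icc (0:ℝ) T) ∧ ContinuousOn ew' (Icc (0:ℝ) T) ∧
  ContinuousOn du' (Icc (0:ℝ) T) ∧ ContinuousOn dw' (Icc (0:ℝ) T) ∧
  ContinuousOn F' (Icc (0:ℝ) T) ∧ ContinuousOn G' (Icc (0:ℝ) T) ∧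
  (∀ t ∈ Icc (0:ℝ) T,
      (M t).mulVec (eu' t) + (A t).mulVec (ew t)
        = F t - (M' t).mulVec (eu t) - (M t).mulVec (du t)) ∧
  (∀ t ∈ Icc (0:ℝ) T,
      (M t).mulVec (ew t) - (A t).mulVec (eu t)
        = G t - (M t).mulVec (dw t) + ϑ)

lemma symm_dot {N : ℕ} {P : Matrix (Fin N) (Fin N) ℝ} (hP : P.IsHermitian)
    (x y : Fin N → ℝ) : x ⬝ᵥ P.mulVec y = y ⬝ᵥ P.mulVec x := by
  have hPt : Pᵀ = P := by
    have := hP; rwa [Matrix.IsHermitian, Matrix.conjTranspose_eq_transpose_of_trivial] at this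
  rw [Matrix.dotProduct_mulVec, ← Matrix.mulVec_transpose, hPt, dotProduct_comm]

/-- Second energy identity of part (i) of the stability proof: testing the first error
equation with `e_w` and the second with `e_u'` and subtracting, the mixed term cancels,
giving `(1/2)·(d/dt)(‖e_u‖_{A(t)}²) + ‖e_w‖_{A(t)}²
  = (1/2)·e_uᵀA'e_u − e_wᵀM'e_u + e_wᵀF − e_u'ᵀG − e_wᵀM d_u + e_u'ᵀM d_w − e_u'ᵀϑ`. -/
theorem stmt3 {N : ℕ} (hN : 1 ≤ N) {T : ℝ} (hT : 0 < T)
    (M A M' A' : ℝ → Matrix (Fin N) (Fin N) ℝ)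
    (eu ew eu' ew' du dw du' dw' F G F' G' : ℝ → Fin N → ℝ)
    (ϑ : Fin N → ℝ)
    (hyp : CHBasic T M A M' A' eu ew eu' ew' du dw du' dw' F G F' G' ϑ) :
    ∀ t ∈ Icc (0:ℝ) T,
      HasDerivAt (fun s => qf (A s) (eu s))
        (2 * (((1/2) * (eu t ⬝ᵥ (A' t).mulVec (eu t))
              - ew t ⬝ᵥ (M' t).mulVec (eu t)
              + ew t ⬝ᵥ F t - eu' t ⬝ᵥ G t
              - ew t ⬝ᵥ (M t).mulVec (du t) + eu' t ⬝ᵥ (M t).mulVec (dw t)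
              - eu' t ⬝ᵥ ϑ)
            - qf (A t) (ew t))) t := by
  obtain ⟨hM, hA, _, _, hMpd, hApsd, heu, hew, _, _, _, _, _, _, _, _, _, _, heq1, heq2⟩ := hyp
  intro t ht
  -- derivative of the quadratic form
  have hqf : ∀ s, qf (A s) (eu s) = ∑ i, ∑ j, eu s i * (A s i j * eu s j) := by
    intro s
    simp [qf, dotProduct, Matrix.mulVec, Finset.mul_sum]
  have heui : ∀ i, HasDerivAt (fun s => eu s i) (eu' t i) t :=
    (hasDerivAt_pi.mp (heu t ht))
  have hD : HasDerivAt (fun s => qf (A s) (eu s))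
      (∑ i, ∑ j, ((eu' t i * (A t i j * eu t j))
        + eu t i * (A' t i j * eu t j + A t i j * eu' t j))) t := by
    have : HasDerivAt (fun s => ∑ i, ∑ j, eu s i * (A s i j * eu s j))
        (∑ i, ∑ j, ((eu' t i * (A t i j * eu t j))
          + eu t i * (A' t i j * eu t j + A t i j * eu' t j))) t := by
      refine HasDerivAt.fun_sum fun i _ => HasDerivAt.fun_sum fun j _ => ?_
      exact (heui i).mul ((hA t ht i j).mul (heui j))
    exact this.congr_of_eventuallyEq (by filter_upwards with s using hqf s)
  -- rewrite the derivative as dot products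
  have hsum : (∑ i, ∑ j, ((eu' t i * (A t i j * eu t j))
        + eu t i * (A' t i j * eu t j + A t i j * eu' t j)))
      = eu' t ⬝ᵥ (A t).mulVec (eu t) + eu t ⬝ᵥ (A' t).mulVec (eu t)
        + eu t ⬝ᵥ (A t).mulVec (eu' t) := by
    simp only [dotProduct, Matrix.mulVec, Finset.mul_sum, ← Finset.sum_add_distrib]
    refine Finset.sum_congr rfl fun i _ => Finset.sum_congr rfl fun j _ => by ring
  rw [hsum] at hD
  -- identify with the claimed expression
  have hAsym := (hApsd t ht).isHermitian
  have hMsym := (hMpd t ht).isHermitian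
  have h1 : ew t ⬝ᵥ ((M t).mulVec (eu' t) + (A t).mulVec (ew t))
      = ew t ⬝ᵥ (F t - (M' t).mulVec (eu t) - (M t).mulVec (du t)) := by
    rw [heq1 t ht]
  have h2 : eu' t ⬝ᵥ ((M t).mulVec (ew t) - (A t).mulVec (eu t))
      = eu' t ⬝ᵥ (G t - (M t).mulVec (dw t) + ϑ) := by
    rw [heq2 t ht]
  rw [dotProduct_add, dotProduct_sub, dotProduct_sub] at h1
  rw [dotProduct_sub, dotProduct_add, dotProduct_sub] at h2
  have hcancel : ew t ⬝ᵥ (M t).mulVec (eu' t) = eu' t ⬝ᵥ (M t).mulVec (ew t) :=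
    symm_dot hMsym _ _
  have hAeu : eu t ⬝ᵥ (A t).mulVec (eu' t) = eu' t ⬝ᵥ (A t).mulVec (eu t) :=
    symm_dot hAsym _ _
  have hkey : eu' t ⬝ᵥ (A t).mulVec (eu t) + eu t ⬝ᵥ (A' t).mulVec (eu t)
        + eu t ⬝ᵥ (A t).mulVec (eu' t)
      = 2 * (((1/2) * (eu t ⬝ᵥ (A' t).mulVec (eu t))
              - ew t ⬝ᵥ (M' t).mulVec (eu t)
              + ew t ⬝ᵥ F t - eu' t ⬝ᵥ G t
              - ew t ⬝ᵥ (M t).mulVec (du t) + eu' t ⬝ᵥ (M t).mulVec (dw t)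
              - eu' t ⬝ᵥ ϑ)
            - qf (A t) (ew t)) := by
    simp only [qf] at *
    linarith [h1, h2, hcancel, hAeu]
  rwa [hkey] at hD
end

section
/- For every ρ₀ > 0 there exists a constant c > 0, depending only on c_*, L, T and ρ₀, such that for all t ∈ [0,T]: ‖e_u(t)‖_{K(t)}² + ∫₀ᵗ ‖e_w(s)‖_{K(s)}² ds ≤ ρ₀·∫₀ᵗ ‖e_u'(s)‖_{K(s)}² ds + c·∫₀ᵗ ‖e_u(s)‖_{K(s)}² ds + c·∫₀ᵗ (‖d_u(s)‖_{M(s)}² + ‖d_w(s)‖_{M(s)}²) ds + c·t·‖d_w(0)‖_{M(0)}². (First integrated energy estimate of the stability proof; note the critical term with e_u' on the right-hand side, which is later controlled by the second set of energy estimates.) -/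
open Matrix Set

/-- The squared norm `‖z‖_{K}² = ‖z‖_{M}² + ‖z‖_{A}²` where `K = M + A`. -/
def kq {N : ℕ} (M A : Matrix (Fin N) (Fin N) ℝ) (z : Fin N → ℝ) : ℝ :=
  qf M z + qf A z

/-- The norm `‖z‖_{K} = (‖z‖_{M}² + ‖z‖_{A}²)^{1/2}` where `K = M + A`. -/
noncomputable def knorm {N : ℕ} (M A : Matrix (Fin N) (Fin N) ℝ) (z : Fin N → ℝ) : ℝ :=
  Real.sqrt (kq M A z)

/-- Full hypothesis set of the stability proof: the basic error-equation setting,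
the bounds `|wᵀM'(t)z| ≤ c_*‖w‖_{M(t)}‖z‖_{M(t)}`, `|wᵀA'(t)z| ≤ c_*‖w‖_{A(t)}‖z‖_{A(t)}`,
vanishing initial errors, `ϑ = M(0)d_w(0)`, and the locally-Lipschitz-type bounds on the
nonlinear differences `F`, `G` and their time derivatives. -/
def CHHyps {N : ℕ} (T cstar L : ℝ)
    (M A M' A' : ℝ → Matrix (Fin N) (Fin N) ℝ)
    (eu ew eu' ew' du dw du' dw' F G F' G' : ℝ → Fin N → ℝ)
    (ϑ : Fin N → ℝ) : Prop :=
  CHBasic T M A M' A' eu ew eu' ew' du dw du' dw' F G F' G' ϑ ∧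
  (∀ t ∈ Icc (0:ℝ) T, ∀ w z : Fin N → ℝ,
      |w ⬝ᵥ (M' t).mulVec z| ≤ cstar * mnorm (M t) w * mnorm (M t) z) ∧
  (∀ t ∈ Icc (0:ℝ) T, ∀ w z : Fin N → ℝ,
      |w ⬝ᵥ (A' t).mulVec z| ≤ cstar * mnorm (A t) w * mnorm (A t) z) ∧
  eu 0 = 0 ∧ ew 0 = 0 ∧ ϑ = (M 0).mulVec (dw 0) ∧
  (∀ t ∈ Icc (0:ℝ) T, ∀ v : Fin N → ℝ,
      |v ⬝ᵥ F t| ≤ L * mnorm (M t) v * knorm (M t) (A t) (eu t)) ∧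
  (∀ t ∈ Icc (0:ℝ) T, ∀ v : Fin N → ℝ,
      |v ⬝ᵥ G t| ≤ L * mnorm (M t) v * knorm (M t) (A t) (eu t)) ∧
  (∀ t ∈ Icc (0:ℝ) T, ∀ v : Fin N → ℝ,
      |v ⬝ᵥ F' t| ≤ L * mnorm (M t) v
        * (knorm (M t) (A t) (eu t) + knorm (M t) (A t) (eu' t))) ∧
  (∀ t ∈ Icc (0:ℝ) T, ∀ v : Fin N → ℝ,
      |v ⬝ᵥ G' t| ≤ L * mnorm (M t) v
        * (knorm (M t) (A t) (eu t) + knorm (M t) (A t) (eu' t)))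

lemma qf_zero {N : ℕ} (P : Matrix (Fin N) (Fin N) ℝ) : qf P 0 = 0 := by
  simp [qf]

lemma qf_nonneg {N : ℕ} {P : Matrix (Fin N) (Fin N) ℝ} (h : P.PosSemidef)
    (z : Fin N → ℝ) : 0 ≤ qf P z := by
  simpa [qf] using h.dotProduct_mulVec_nonneg z

lemma bilin_symm {N : ℕ} {P : Matrix (Fin N) (Fin N) ℝ} (h : P.IsHermitian)
    (w z : Fin N → ℝ) : w ⬝ᵥ P.mulVec z = z ⬝ᵥ P.mulVec w := by
  have hPt : P.transpose = P := by
    have h2 := h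
    rwa [Matrix.IsHermitian, conjTranspose_eq_transpose_of_trivial] at h2
  rw [Matrix.dotProduct_mulVec w P z, ← Matrix.mulVec_transpose, hPt, dotProduct_comm]

lemma cs {N : ℕ} {P : Matrix (Fin N) (Fin N) ℝ} (h : P.PosSemidef)
    (w z : Fin N → ℝ) :
    |w ⬝ᵥ P.mulVec z| ≤ Real.sqrt (qf P w) * Real.sqrt (qf P z) := by
  set X := w ⬝ᵥ P.mulVec z with hX
  set a := qf P w with ha
  set b := qf P z with hb
  have ha0 : 0 ≤ a := qf_nonneg h w
  have hb0 : 0 ≤ b := qf_nonneg h z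
  have key : ∀ r : ℝ, 0 ≤ a + 2 * r * X + r ^ 2 * b := by
    intro r
    have h0 := qf_nonneg h (w + r • z)
    have hsymm := bilin_symm h.1 w z
    have hexp : qf P (w + r • z) = a + 2 * r * X + r ^ 2 * b := by
      simp only [qf, hX, ha, hb, Matrix.mulVec_add, Matrix.mulVec_smul, dotProduct_add,
        add_dotProduct, smul_dotProduct, dotProduct_smul, smul_eq_mul]
      linear_combination (-r) * hsymm
    linarith [hexp ▸ h0]
  have hsq : X ^ 2 ≤ a * b := by
    rcases eq_or_lt_of_le hb0 with hb1 | hb1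
    · -- b = 0
      have hX0 : X = 0 := by
        by_contra hne
        have h1 := key (-(a + 1) / (2 * X))
        rw [← hb1] at h1
        have h2 : 2 * (-(a + 1) / (2 * X)) * X = -(a + 1) := by field_simp
        rw [h2] at h1
        linarith
      rw [hX0]; nlinarith
    · have h1 := key (-X / b)
      have heq : a + 2 * (-X / b) * X + (-X / b) ^ 2 * b = a - X ^ 2 / b := by
        field_simp; ring
      rw [heq] at h1
      have h2 : X ^ 2 / b * b = X ^ 2 := div_mul_cancel₀ _ (ne_of_gt hb1)
      nlinarith [mul_nonneg h1 hb1.le]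
  calc |X| = Real.sqrt (X ^ 2) := (Real.sqrt_sq_eq_abs X).symm
    _ ≤ Real.sqrt (a * b) := Real.sqrt_le_sqrt hsq
    _ = Real.sqrt a * Real.sqrt b := Real.sqrt_mul ha0 b

lemma hasDerivAt_bilin {N : ℕ} {P : ℝ → Matrix (Fin N) (Fin N) ℝ}
    {Q : Matrix (Fin N) (Fin N) ℝ} {u v : ℝ → Fin N → ℝ} {u' v' : Fin N → ℝ} {t : ℝ}
    (hP : ∀ i j, HasDerivAt (fun s => P s i j) (Q i j) t)
    (hu : HasDerivAt u u' t) (hv : HasDerivAt v v' t) :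
    HasDerivAt (fun s => u s ⬝ᵥ (P s).mulVec (v s))
      (u' ⬝ᵥ (P t).mulVec (v t) + u t ⬝ᵥ Q.mulVec (v t)
        + u t ⬝ᵥ (P t).mulVec (v' )) t := by
  have hui : ∀ i, HasDerivAt (fun s => u s i) (u' i) t := fun i => hasDerivAt_pi.1 hu i
  have hvi : ∀ i, HasDerivAt (fun s => v s i) (v' i) t := fun i => hasDerivAt_pi.1 hv i
  have h1 : HasDerivAt (fun s => ∑ i, ∑ j, u s i * (P s i j * v s j))
      (∑ i, ∑ j, (u' i * (P t i j * v t j) + u t i * (Q i j * v t j)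
        + u t i * (P t i j * v' j))) t := by
    apply HasDerivAt.fun_sum
    intro i _
    apply HasDerivAt.fun_sum
    intro j _
    have := (hui i).fun_mul ((hP i j).fun_mul (hvi j))
    exact this.congr_deriv (by ring)
  have heq : (fun s => ∑ i, ∑ j, u s i * (P s i j * v s j))
      = fun s => u s ⬝ᵥ (P s).mulVec (v s) := by
    funext s
    simp [dotProduct, Matrix.mulVec, Finset.mul_sum]
  rw [heq] at h1
  convert h1 using 1
  simp [dotProduct, Matrix.mulVec, Finset.mul_sum, Finset.sum_add_distrib]

lemma mnorm_mul_self {N : ℕ} {P : Matrix (Fin N) (Fin N) ℝ} (h : P.PosSemidef)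
    (z : Fin N → ℝ) : mnorm P z * mnorm P z = qf P z :=
  Real.mul_self_sqrt (qf_nonneg h z)

lemma continuousOn_bilin {N : ℕ} {P : ℝ → Matrix (Fin N) (Fin N) ℝ}
    {u v : ℝ → Fin N → ℝ} {S : Set ℝ}
    (hP : ∀ i j, ContinuousOn (fun s => P s i j) S)
    (hu : ∀ i, ContinuousOn (fun s => u s i) S)
    (hv : ∀ i, ContinuousOn (fun s => v s i) S) :
    ContinuousOn (fun s => u s ⬝ᵥ (P s).mulVec (v s)) S := by
  have heq : (fun s => u s ⬝ᵥ (P s).mulVec (v s))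
      = fun s => ∑ i, ∑ j, u s i * (P s i j * v s j) := by
    funext s; simp [dotProduct, Matrix.mulVec, Finset.mul_sum]
  rw [heq]
  apply continuousOn_finset_sum
  intro i _
  apply continuousOn_finset_sum
  intro j _
  exact (hu i).mul ((hP i j).mul (hv j))

lemma gronwall_qf {N : ℕ} {T cstar : ℝ} (hT : 0 < T) (hc : 0 < cstar)
    {M M' : ℝ → Matrix (Fin N) (Fin N) ℝ}
    (hM : ∀ t ∈ Icc (0:ℝ) T, ∀ i j, HasDerivAt (fun s => M s i j) (M' t i j) t)
    (hMpos : ∀ t ∈ Icc (0:ℝ) T, (M t).PosSemidef)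
    (hbound : ∀ t ∈ Icc (0:ℝ) T, ∀ w z : Fin N → ℝ,
      |w ⬝ᵥ (M' t).mulVec z| ≤ cstar * mnorm (M t) w * mnorm (M t) z)
    (z : Fin N → ℝ) {s : ℝ} (hs : s ∈ Icc (0:ℝ) T) :
    qf (M 0) z ≤ Real.exp (cstar * T) * qf (M s) z := by
  set H : ℝ → ℝ := fun r => Real.exp (cstar * r) * qf (M r) z with hH
  have hderiv : ∀ r ∈ Icc (0:ℝ) T, HasDerivAt H
      (cstar * Real.exp (cstar * r) * qf (M r) z
        + Real.exp (cstar * r) * (z ⬝ᵥ (M' r).mulVec z)) r := by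
    intro r hr
    have hg : HasDerivAt (fun x => qf (M x) z) (z ⬝ᵥ (M' r).mulVec z) r := by
      have := hasDerivAt_bilin (hM r hr) (hasDerivAt_const r z) (hasDerivAt_const r z)
      simpa [qf] using this
    have he : HasDerivAt (fun x => Real.exp (cstar * x)) (cstar * Real.exp (cstar * r)) r := by
      have := (Real.hasDerivAt_exp (cstar * r)).comp r
        ((hasDerivAt_id r).const_mul cstar)
      simpa [mul_comm, Function.comp_def] using this
    exact he.mul hg
  have hmono : MonotoneOn H (Icc (0:ℝ) T) := by
    apply monotoneOn_of_deriv_nonneg (convex_Icc 0 T)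
    · intro r hr
      exact (hderiv r hr).continuousAt.continuousWithinAt
    · intro r hr
      rw [interior_Icc] at hr
      exact (hderiv r (Ioo_subset_Icc_self hr)).differentiableAt.differentiableWithinAt
    · intro r hr
      rw [interior_Icc] at hr
      have hr' := Ioo_subset_Icc_self hr
      rw [(hderiv r hr').deriv]
      have hb := hbound r hr' z z
      rw [mul_assoc, mnorm_mul_self (hMpos r hr')] at hb
      have hexp : (0:ℝ) < Real.exp (cstar * r) := Real.exp_pos _
      nlinarith [neg_abs_le (z ⬝ᵥ (M' r).mulVec z)]
  have h0 : H 0 ≤ H s := hmono (left_mem_Icc.2 (le_trans hs.1 hs.2)) hs hs.1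
  have hHs : H s ≤ Real.exp (cstar * T) * qf (M s) z :=
    mul_le_mul_of_nonneg_right (Real.exp_le_exp.2 (by nlinarith [hs.2]))
      (qf_nonneg (hMpos s hs) z)
  have hH0 : H 0 = qf (M 0) z := by simp [hH]
  linarith

lemma young_ineq (x y ε : ℝ) (hε : 0 < ε) : 2 * (x * y) ≤ ε * x ^ 2 + (1 / ε) * y ^ 2 := by
  have key : ε * (ε * x ^ 2 + (1 / ε) * y ^ 2 - 2 * (x * y)) = (ε * x - y) ^ 2 := by
    field_simp; ring
  have h0 : 0 ≤ ε * (ε * x ^ 2 + (1 / ε) * y ^ 2 - 2 * (x * y)) := key ▸ sq_nonneg _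
  nlinarith [(mul_nonneg_iff_of_pos_left hε).mp h0]

lemma young_pair {p α x y X Y ε : ℝ} (hε : 0 < ε)
    (hp : |p| ≤ α * x * y) (hx : x * x = X) (hy : y * y = Y) :
    2 * p ≤ ε * X + α ^ 2 / ε * Y ∧ -(2 * p) ≤ ε * X + α ^ 2 / ε * Y := by
  subst hx; subst hy
  have h := young_ineq x (α * y) ε hε
  have h1 := le_of_abs_le hp
  have h2 := neg_le_of_abs_le hp
  have he1 : ε * x ^ 2 + (1 / ε) * (α * y) ^ 2 = ε * (x * x) + α ^ 2 / ε * (y * y) := by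
    field_simp
  have he2 : 2 * (x * (α * y)) = 2 * (α * x * y) := by ring
  constructor <;> linarith


lemma young_pair' {p α x y X Y ε δ : ℝ} (hε : 0 < ε) (hδ : 0 ≤ δ)
    (hαεδ : α ^ 2 ≤ ε * δ) (hp : |p| ≤ α * x * y) (hx : x * x = X) (hy : y * y = Y) :
    2 * p ≤ ε * X + δ * Y ∧ -(2 * p) ≤ ε * X + δ * Y := by
  subst hx; subst hy
  have hxy : 0 ≤ α * x * y := le_trans (abs_nonneg p) hp
  have h1 : (2 * (α * x * y)) ^ 2 ≤ 4 * (ε * δ) * (x * y) ^ 2 := by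
    nlinarith [sq_nonneg (x * y), hαεδ]
  have h2 : 4 * (ε * δ) * (x * y) ^ 2 ≤ (ε * (x * x) + δ * (y * y)) ^ 2 := by
    nlinarith [sq_nonneg (ε * (x * x) - δ * (y * y))]
  have h3 : 0 ≤ ε * (x * x) + δ * (y * y) :=
    add_nonneg (mul_nonneg hε.le (mul_self_nonneg x)) (mul_nonneg hδ (mul_self_nonneg y))
  have h4 : 2 * (α * x * y) ≤ ε * (x * x) + δ * (y * y) := by
    have hs := Real.sqrt_le_sqrt (le_trans h1 h2)
    rwa [Real.sqrt_sq (by linarith), Real.sqrt_sq h3] at hs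
  have h5 := le_of_abs_le hp
  have h6 := neg_le_of_abs_le hp
  constructor <;> linarith

set_option maxHeartbeats 2000000 in
/-- First integrated energy estimate of the stability proof: for every `ρ₀ > 0` there is
`c > 0` (depending only on `c_*`, `L`, `T` and `ρ₀`) with
`‖e_u(t)‖_{K(t)}² + ∫₀ᵗ ‖e_w‖_{K}² ≤ ρ₀·∫₀ᵗ ‖e_u'‖_{K}² + c·∫₀ᵗ ‖e_u‖_{K}²
  + c·∫₀ᵗ (‖d_u‖_{M}² + ‖d_w‖_{M}²) + c·t·‖d_w(0)‖_{M(0)}²` for all `t ∈ [0,T]`;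
note the critical term with `e_u'` on the right-hand side. -/
theorem stmt5 (cstar L T ρ₀ : ℝ)
    (hcstar : 0 < cstar) (hL : 0 < L) (hT : 0 < T) (hρ₀ : 0 < ρ₀) :
    ∃ c > (0:ℝ), ∀ (N : ℕ), 1 ≤ N →
      ∀ (M A M' A' : ℝ → Matrix (Fin N) (Fin N) ℝ)
        (eu ew eu' ew' du dw du' dw' F G F' G' : ℝ → Fin N → ℝ)
        (ϑ : Fin N → ℝ),
        CHHyps T cstar L M A M' A' eu ew eu' ew' du dw du' dw' F G F' G' ϑ →
        ∀ t ∈ Icc (0:ℝ) T,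
          kq (M t) (A t) (eu t) + (∫ s in (0:ℝ)..t, kq (M s) (A s) (ew s))
            ≤ ρ₀ * (∫ s in (0:ℝ)..t, kq (M s) (A s) (eu' s))
              + c * (∫ s in (0:ℝ)..t, kq (M s) (A s) (eu s))
              + c * (∫ s in (0:ℝ)..t, (qf (M s) (du s) + qf (M s) (dw s)))
              + c * t * qf (M 0) (dw 0) := by
  obtain ⟨R, hRpos, hRρ⟩ : ∃ R : ℝ, 0 < R ∧ ρ₀ * R = 3 :=
    ⟨3 / ρ₀, by positivity, by field_simp⟩
  set C0 := Real.exp (cstar * T) with hC0def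
  have hC0pos : (0:ℝ) < C0 := hC0def ▸ Real.exp_pos _
  clear_value C0
  set S := 2 + cstar + 8*cstar^2 + 9*L^2 + L^2*R + R + 9 + 8 with hSdef
  have hSpos : 0 < S := by
    have h1 : 0 ≤ L^2*R := mul_nonneg (sq_nonneg L) hRpos.le
    have h2 : 0 ≤ cstar^2 := sq_nonneg cstar
    have h3 : 0 ≤ L^2 := sq_nonneg L
    rw [hSdef]; linarith only [h1, h2, h3, hcstar, hRpos]
  clear_value S
  refine ⟨S * (1 + C0), mul_pos hSpos (by linarith), ?_⟩
  set c := S * (1 + C0) with hcdef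
  have hcpos : 0 < c := by rw [hcdef]; exact mul_pos hSpos (by linarith)
  clear_value c
  have hSc : S ≤ c := by
    have h1 : S * 1 ≤ S * (1 + C0) := mul_le_mul_of_nonneg_left (by linarith only [hC0pos]) hSpos.le
    linarith only [hcdef, h1]
  have hq2 : (9:ℝ) ≤ S := by
    have h1 : 0 ≤ L^2*R := mul_nonneg (sq_nonneg L) hRpos.le
    linarith only [hSdef, sq_nonneg cstar, sq_nonneg L, hcstar, hRpos, h1]
  have hq3 : R + 8 ≤ S := by
    have h1 : 0 ≤ L^2*R := mul_nonneg (sq_nonneg L) hRpos.le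
    linarith only [hSdef, sq_nonneg cstar, sq_nonneg L, hcstar, hRpos, h1]
  have hc1 : 2 + cstar + 8*cstar^2 + 9*L^2 + L^2*R ≤ c := by
    have h1 : 0 ≤ L^2*R := mul_nonneg (sq_nonneg L) hRpos.le
    have h2 : 2 + cstar + 8*cstar^2 + 9*L^2 + L^2*R ≤ S := by
      linarith only [hSdef, hRpos, h1]
    linarith only [h2, hSc]
  have hc2 : (9:ℝ) ≤ c := le_trans hq2 hSc
  have hc3 : R + 8 ≤ c := le_trans hq3 hSc
  have hc4 : C0*R + 8*C0 ≤ c := by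
    have h1 : (R + 8) * C0 ≤ S * C0 := mul_le_mul_of_nonneg_right hq3 hC0pos.le
    linarith only [h1, hSpos, hcdef]
  intro N hN M A M' A' eu ew eu' ew' du dw du' dw' F G F' G' ϑ hyp t ht
  obtain ⟨⟨hMd, hAd, hM'c, hA'c, hMpos, hApos, heud, hewd, hdud, hdwd, hFd, hGd,
    heu'c, hew'c, hdu'c, hdw'c, hF'c, hG'c, heqn1, heqn2⟩,
    hM'bd, hA'bd, heu0, hew0, hθ, hFbd, hGbd, hF'bd, hG'bd⟩ := hyp
  have hMsemi : ∀ r ∈ Icc (0:ℝ) T, (M r).PosSemidef := fun r hr => (hMpos r hr).posSemidef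
  -- component continuity
  have contD : ∀ {f : ℝ → Fin N → ℝ} (f' : ℝ → Fin N → ℝ),
      (∀ x ∈ Icc (0:ℝ) T, HasDerivAt f (f' x) x) →
      ∀ i, ContinuousOn (fun s => f s i) (Icc (0:ℝ) T) := by
    intro f f' hf i x hx
    exact (((continuous_apply i).continuousAt).comp (hf x hx).continuousAt).continuousWithinAt
  have hceu := contD eu' heud
  have hcew := contD ew' hewd
  have hcdu := contD du' hdud
  have hcdw := contD dw' hdwd
  have hceu' : ∀ i, ContinuousOn (fun s => eu' s i) (Icc (0:ℝ) T) :=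
    fun i => (continuous_apply i).comp_continuousOn heu'c
  have hcM : ∀ i j, ContinuousOn (fun s => M s i j) (Icc (0:ℝ) T) :=
    fun i j x hx => ((hMd x hx i j).continuousAt).continuousWithinAt
  have hcA : ∀ i j, ContinuousOn (fun s => A s i j) (Icc (0:ℝ) T) :=
    fun i j x hx => ((hAd x hx i j).continuousAt).continuousWithinAt
  -- the derivative of the energy
  set Ederiv : ℝ → ℝ := fun s =>
      2*(eu s ⬝ᵥ (M s).mulVec (eu' s)) + eu s ⬝ᵥ (M' s).mulVec (eu s)
      + (2*(eu s ⬝ᵥ (A s).mulVec (eu' s)) + eu s ⬝ᵥ (A' s).mulVec (eu s)) with hEdef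
  clear_value Ederiv
  have hEd : ∀ s ∈ Icc (0:ℝ) T,
      HasDerivAt (fun r => kq (M r) (A r) (eu r)) (Ederiv s) s := by
    intro s hs
    have h1 := hasDerivAt_bilin (hMd s hs) (heud s hs) (heud s hs)
    have h2 := hasDerivAt_bilin (hAd s hs) (heud s hs) (heud s hs)
    have hsymM := bilin_symm (hMpos s hs).1 (eu' s) (eu s)
    have hsymA := bilin_symm (hApos s hs).1 (eu' s) (eu s)
    have heq : Ederiv s =
        (eu' s ⬝ᵥ (M s).mulVec (eu s) + eu s ⬝ᵥ (M' s).mulVec (eu s)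
          + eu s ⬝ᵥ (M s).mulVec (eu' s))
        + (eu' s ⬝ᵥ (A s).mulVec (eu s) + eu s ⬝ᵥ (A' s).mulVec (eu s)
          + eu s ⬝ᵥ (A s).mulVec (eu' s)) := by
      rw [hEdef]; dsimp only; rw [hsymM, hsymA]; ring
    rw [heq]
    exact h1.add h2
  -- the pointwise energy inequality
  have key : ∀ s ∈ Icc (0:ℝ) T,
      Ederiv s + kq (M s) (A s) (ew s)
        ≤ ρ₀ * kq (M s) (A s) (eu' s) + c * kq (M s) (A s) (eu s)
          + c * (qf (M s) (du s) + qf (M s) (dw s)) + c * qf (M 0) (dw 0) := by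
    intro s hs
    have hMs : (M s).PosSemidef := hMsemi s hs
    have hAs := hApos s hs
    have h0T : (0:ℝ) ∈ Icc (0:ℝ) T := left_mem_Icc.2 hT.le
    have hM0 : (M 0).PosSemidef := hMsemi 0 h0T
    -- nonnegativity
    have hPm0 := qf_nonneg hMs (eu s)
    have hPa0 := qf_nonneg hAs (eu s)
    have hWm0 := qf_nonneg hMs (ew s)
    have hWa0 := qf_nonneg hAs (ew s)
    have hUm0 := qf_nonneg hMs (eu' s)
    have hUa0 := qf_nonneg hAs (eu' s)
    have hDm0 := qf_nonneg hMs (du s)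
    have hDw0 := qf_nonneg hMs (dw s)
    have hD00 := qf_nonneg hM0 (dw 0)
    have hK0 : 0 ≤ qf (M s) (eu s) + qf (A s) (eu s) := add_nonneg hPm0 hPa0
    -- squared-sqrt identities
    have sPm : Real.sqrt (qf (M s) (eu s)) * Real.sqrt (qf (M s) (eu s)) = qf (M s) (eu s) :=
      Real.mul_self_sqrt hPm0
    have sPa : Real.sqrt (qf (A s) (eu s)) * Real.sqrt (qf (A s) (eu s)) = qf (A s) (eu s) :=
      Real.mul_self_sqrt hPa0
    have sWm : Real.sqrt (qf (M s) (ew s)) * Real.sqrt (qf (M s) (ew s)) = qf (M s) (ew s) :=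
      Real.mul_self_sqrt hWm0
    have sUm : Real.sqrt (qf (M s) (eu' s)) * Real.sqrt (qf (M s) (eu' s)) = qf (M s) (eu' s) :=
      Real.mul_self_sqrt hUm0
    have sDm : Real.sqrt (qf (M s) (du s)) * Real.sqrt (qf (M s) (du s)) = qf (M s) (du s) :=
      Real.mul_self_sqrt hDm0
    have sDw : Real.sqrt (qf (M s) (dw s)) * Real.sqrt (qf (M s) (dw s)) = qf (M s) (dw s) :=
      Real.mul_self_sqrt hDw0
    have sD0 : Real.sqrt (qf (M 0) (dw 0)) * Real.sqrt (qf (M 0) (dw 0)) = qf (M 0) (dw 0) :=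
      Real.mul_self_sqrt hD00
    have sK : Real.sqrt (qf (M s) (eu s) + qf (A s) (eu s))
        * Real.sqrt (qf (M s) (eu s) + qf (A s) (eu s))
        = qf (M s) (eu s) + qf (A s) (eu s) := Real.mul_self_sqrt hK0
    -- pairings from the error equations
    have E1 := heqn1 s hs
    have E2 := heqn2 s hs
    have A1 : eu s ⬝ᵥ (M s).mulVec (eu' s) + eu s ⬝ᵥ (A s).mulVec (ew s)
        = eu s ⬝ᵥ F s - eu s ⬝ᵥ (M' s).mulVec (eu s) - eu s ⬝ᵥ (M s).mulVec (du s) := by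
      have h := congrArg (fun x => eu s ⬝ᵥ x) E1
      simpa [dotProduct_add, dotProduct_sub] using h
    have A2 : ew s ⬝ᵥ (M s).mulVec (eu' s) + ew s ⬝ᵥ (A s).mulVec (ew s)
        = ew s ⬝ᵥ F s - ew s ⬝ᵥ (M' s).mulVec (eu s) - ew s ⬝ᵥ (M s).mulVec (du s) := by
      have h := congrArg (fun x => ew s ⬝ᵥ x) E1
      simpa [dotProduct_add, dotProduct_sub] using h
    have A3 : eu' s ⬝ᵥ (M s).mulVec (ew s) - eu' s ⬝ᵥ (A s).mulVec (eu s)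
        = eu' s ⬝ᵥ G s - eu' s ⬝ᵥ (M s).mulVec (dw s) + eu' s ⬝ᵥ ϑ := by
      have h := congrArg (fun x => eu' s ⬝ᵥ x) E2
      simpa [dotProduct_add, dotProduct_sub] using h
    have A4 : ew s ⬝ᵥ (M s).mulVec (ew s) - ew s ⬝ᵥ (A s).mulVec (eu s)
        = ew s ⬝ᵥ G s - ew s ⬝ᵥ (M s).mulVec (dw s) + ew s ⬝ᵥ ϑ := by
      have h := congrArg (fun x => ew s ⬝ᵥ x) E2
      simpa [dotProduct_add, dotProduct_sub] using h
    -- symmetry facts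
    have S2 : ew s ⬝ᵥ (M s).mulVec (eu' s) = eu' s ⬝ᵥ (M s).mulVec (ew s) :=
      bilin_symm hMs.1 _ _
    have S3 : eu s ⬝ᵥ (A s).mulVec (ew s) = ew s ⬝ᵥ (A s).mulVec (eu s) :=
      bilin_symm hAs.1 _ _
    have SA : eu s ⬝ᵥ (A s).mulVec (eu' s) = eu' s ⬝ᵥ (A s).mulVec (eu s) :=
      bilin_symm hAs.1 _ _
    -- the main algebraic identity
    have IDENT : Ederiv s + 2*(qf (M s) (ew s)) + 2*(qf (A s) (ew s))
        = 2*(eu s ⬝ᵥ F s) - (eu s ⬝ᵥ (M' s).mulVec (eu s)) + (eu s ⬝ᵥ (A' s).mulVec (eu s))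
          - 2*(eu s ⬝ᵥ (M s).mulVec (du s)) + 2*(ew s ⬝ᵥ F s)
          - 2*(ew s ⬝ᵥ (M' s).mulVec (eu s)) - 2*(ew s ⬝ᵥ (M s).mulVec (du s))
          - 2*(eu' s ⬝ᵥ G s) + 2*(eu' s ⬝ᵥ (M s).mulVec (dw s)) - 2*(eu' s ⬝ᵥ ϑ)
          + 2*(ew s ⬝ᵥ G s) - 2*(ew s ⬝ᵥ (M s).mulVec (dw s)) + 2*(ew s ⬝ᵥ ϑ) := by
      rw [hEdef]; dsimp only; simp only [qf]
      linarith only [A1, A2, A3, A4, S2, S3, SA]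
    -- bounds on the nonlinearities, normalized to sqrt form
    have hF1 := hFbd s hs (eu s)
    have hF2 := hFbd s hs (ew s)
    have hG1 := hGbd s hs (eu' s)
    have hG2 := hGbd s hs (ew s)
    simp only [mnorm, knorm, kq] at hF1 hF2 hG1 hG2
    have hM'1 := hM'bd s hs (eu s) (eu s)
    have hM'2 := hM'bd s hs (ew s) (eu s)
    have hA'1 := hA'bd s hs (eu s) (eu s)
    simp only [mnorm] at hM'1 hM'2 hA'1
    -- Gronwall for the norm of ϑ-pairings
    have hgrU : qf (M 0) (eu' s) ≤ C0 * qf (M s) (eu' s) := by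
      rw [hC0def]; exact gronwall_qf hT hcstar hMd hMsemi hM'bd (eu' s) hs
    have hgrW : qf (M 0) (ew s) ≤ C0 * qf (M s) (ew s) := by
      rw [hC0def]; exact gronwall_qf hT hcstar hMd hMsemi hM'bd (ew s) hs
    have hθU : |eu' s ⬝ᵥ ϑ| ≤ Real.sqrt C0 * Real.sqrt (qf (M s) (eu' s))
        * Real.sqrt (qf (M 0) (dw 0)) := by
      rw [hθ]
      have h1 := cs hM0 (eu' s) (dw 0)
      have h2 : Real.sqrt (qf (M 0) (eu' s))
          ≤ Real.sqrt C0 * Real.sqrt (qf (M s) (eu' s)) := by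
        rw [← Real.sqrt_mul hC0pos.le]
        exact Real.sqrt_le_sqrt hgrU
      have h3 := mul_le_mul_of_nonneg_right h2 (Real.sqrt_nonneg (qf (M 0) (dw 0)))
      linarith only [h1, h3]
    have hθW : |ew s ⬝ᵥ ϑ| ≤ Real.sqrt C0 * Real.sqrt (qf (M s) (ew s))
        * Real.sqrt (qf (M 0) (dw 0)) := by
      rw [hθ]
      have h1 := cs hM0 (ew s) (dw 0)
      have h2 : Real.sqrt (qf (M 0) (ew s))
          ≤ Real.sqrt C0 * Real.sqrt (qf (M s) (ew s)) := by
        rw [← Real.sqrt_mul hC0pos.le]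
        exact Real.sqrt_le_sqrt hgrW
      have h3 := mul_le_mul_of_nonneg_right h2 (Real.sqrt_nonneg (qf (M 0) (dw 0)))
      linarith only [h1, h3]
    have sC0 : Real.sqrt C0 ^ 2 = C0 := Real.sq_sqrt hC0pos.le
    -- Young-type bounds
    have b1 := (young_pair one_pos hF1 sPm sK).1
    have b2 : -(eu s ⬝ᵥ (M' s).mulVec (eu s)) ≤ cstar * qf (M s) (eu s) := by
      have h1 := neg_le_of_abs_le hM'1
      nlinarith only [h1, sPm, hcstar]
    have b3 : eu s ⬝ᵥ (A' s).mulVec (eu s) ≤ cstar * qf (A s) (eu s) := by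
      have h1 := le_of_abs_le hA'1
      nlinarith only [h1, sPa, hcstar]
    have b4 := (young_pair one_pos (by
        have h := cs hMs (eu s) (du s); linarith only [h] : |eu s ⬝ᵥ (M s).mulVec (du s)|
          ≤ 1 * Real.sqrt (qf (M s) (eu s)) * Real.sqrt (qf (M s) (du s))) sPm sDm).2
    have b5 := (young_pair (by norm_num : (0:ℝ) < 1/4) hF2 sWm sK).1
    have b6 := (young_pair (by norm_num : (0:ℝ) < 1/8) hM'2 sWm sPm).2
    have b7 := (young_pair (by norm_num : (0:ℝ) < 1/8) (by
        have h := cs hMs (ew s) (du s); linarith only [h] : |ew s ⬝ᵥ (M s).mulVec (du s)|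
          ≤ 1 * Real.sqrt (qf (M s) (ew s)) * Real.sqrt (qf (M s) (du s))) sWm sDm).2
    have hρ3 : (0:ℝ) < ρ₀/3 := by positivity
    have hLR : (0:ℝ) ≤ L^2*R := mul_nonneg (sq_nonneg L) hRpos.le
    have hb8c : L^2 ≤ (ρ₀/3) * (L^2*R) := by
      have he : (ρ₀/3) * (L^2*R) = L^2 := by linear_combination (L^2/3) * hRρ
      linarith only [he]
    have b8 := (young_pair' hρ3 hLR hb8c hG1 sUm sK).2
    have hb9c : (1:ℝ)^2 ≤ (ρ₀/3) * R := by
      have he : (ρ₀/3) * R = 1 := by linear_combination (1/3) * hRρ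
      linarith only [he]
    have b9 := (young_pair' hρ3 hRpos.le hb9c (by
        have h := cs hMs (eu' s) (dw s); linarith only [h] : |eu' s ⬝ᵥ (M s).mulVec (dw s)|
          ≤ 1 * Real.sqrt (qf (M s) (eu' s)) * Real.sqrt (qf (M s) (dw s))) sUm sDw).1
    have hb10c : Real.sqrt C0 ^ 2 ≤ (ρ₀/3) * (C0*R) := by
      have he : (ρ₀/3) * (C0*R) = C0 := by linear_combination (C0/3) * hRρ
      rw [sC0]; linarith only [he]
    have b10 := (young_pair' hρ3 (mul_nonneg hC0pos.le hRpos.le) hb10c hθU sUm sD0).2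
    have b11 := (young_pair (by norm_num : (0:ℝ) < 1/4) hG2 sWm sK).1
    have b12 := (young_pair (by norm_num : (0:ℝ) < 1/8) (by
        have h := cs hMs (ew s) (dw s); linarith only [h] : |ew s ⬝ᵥ (M s).mulVec (dw s)|
          ≤ 1 * Real.sqrt (qf (M s) (ew s)) * Real.sqrt (qf (M s) (dw s))) sWm sDw).2
    have b13 := (young_pair (by norm_num : (0:ℝ) < 1/8) hθW sWm sD0).1
    rw [sC0] at b13
    -- combine the constants
    have hP : (2 + cstar + 8*cstar^2 + 9*L^2 + L^2*R) * (qf (M s) (eu s) + qf (A s) (eu s))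
        ≤ c * (qf (M s) (eu s) + qf (A s) (eu s)) :=
      mul_le_mul_of_nonneg_right hc1 hK0
    have hDD : 9 * qf (M s) (du s) + (R + 8) * qf (M s) (dw s)
        ≤ c * (qf (M s) (du s) + qf (M s) (dw s)) := by
      have h1 := mul_le_mul_of_nonneg_right hc2 hDm0
      have h2 := mul_le_mul_of_nonneg_right hc3 hDw0
      linarith only [h1, h2]
    have hD0c : (C0*R + 8*C0) * qf (M 0) (dw 0) ≤ c * qf (M 0) (dw 0) :=
      mul_le_mul_of_nonneg_right hc4 hD00
    have hslack1 : 0 ≤ cstar^2 * qf (A s) (eu s) := by positivity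
    have hslack2 : 0 ≤ cstar * qf (A s) (eu s) := by positivity
    have hslack3 : 0 ≤ ρ₀ * qf (A s) (eu' s) := by positivity
    simp only [kq]
    linarith only [IDENT, b1, b2, b3, b4, b5, b6, b7, b8, b9, b10, b11, b12, b13,
      hP, hDD, hD0c, hslack1, hslack2, hslack3, hWa0, hPa0]
  -- Step C: integrate over [0, t]
  have ht0 : (0:ℝ) ≤ t := ht.1
  have h0t : Icc (0:ℝ) t ⊆ Icc (0:ℝ) T := Icc_subset_Icc le_rfl ht.2
  have huicc : uIcc (0:ℝ) t = Icc (0:ℝ) t := uIcc_of_le ht0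
  -- continuity of all integrands on [0, t]
  have cW : ContinuousOn (fun s => kq (M s) (A s) (ew s)) (Icc (0:ℝ) t) :=
    (((continuousOn_bilin hcM hcew hcew).add (continuousOn_bilin hcA hcew hcew)).mono h0t :)
  have cU : ContinuousOn (fun s => kq (M s) (A s) (eu' s)) (Icc (0:ℝ) t) :=
    (((continuousOn_bilin hcM hceu' hceu').add (continuousOn_bilin hcA hceu' hceu')).mono h0t :)
  have cP : ContinuousOn (fun s => kq (M s) (A s) (eu s)) (Icc (0:ℝ) t) :=
    (((continuousOn_bilin hcM hceu hceu).add (continuousOn_bilin hcA hceu hceu)).mono h0t :)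
  have cD : ContinuousOn (fun s => qf (M s) (du s) + qf (M s) (dw s)) (Icc (0:ℝ) t) :=
    (((continuousOn_bilin hcM hcdu hcdu).add (continuousOn_bilin hcM hcdw hcdw)).mono h0t :)
  have cEd : ContinuousOn Ederiv (Icc (0:ℝ) t) := by
    rw [hEdef]
    exact ((((continuousOn_const.mul (continuousOn_bilin hcM hceu hceu')).add
      (continuousOn_bilin hM'c hceu hceu)).add
      ((continuousOn_const.mul (continuousOn_bilin hcA hceu hceu')).add
      (continuousOn_bilin hA'c hceu hceu))).mono h0t :)
  -- interval integrability
  have iW : IntervalIntegrable (fun s => kq (M s) (A s) (ew s)) MeasureTheory.volume 0 t :=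
    cW.intervalIntegrable_of_Icc ht0
  have iU : IntervalIntegrable (fun s => kq (M s) (A s) (eu' s)) MeasureTheory.volume 0 t :=
    cU.intervalIntegrable_of_Icc ht0
  have iP : IntervalIntegrable (fun s => kq (M s) (A s) (eu s)) MeasureTheory.volume 0 t :=
    cP.intervalIntegrable_of_Icc ht0
  have iD : IntervalIntegrable (fun s => qf (M s) (du s) + qf (M s) (dw s))
      MeasureTheory.volume 0 t := cD.intervalIntegrable_of_Icc ht0
  have iEd : IntervalIntegrable Ederiv MeasureTheory.volume 0 t :=
    cEd.intervalIntegrable_of_Icc ht0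
  have iC : IntervalIntegrable (fun _ : ℝ => c * qf (M 0) (dw 0)) MeasureTheory.volume 0 t :=
    intervalIntegrable_const
  -- fundamental theorem of calculus
  have hFTC : ∫ s in (0:ℝ)..t, Ederiv s
      = kq (M t) (A t) (eu t) - kq (M 0) (A 0) (eu 0) := by
    apply intervalIntegral.integral_eq_sub_of_hasDerivAt
    · intro x hx
      exact hEd x (h0t (huicc ▸ hx))
    · exact iEd
  have hzero : kq (M 0) (A 0) (eu 0) = 0 := by
    rw [heu0]; simp [kq, qf]
  -- integral monotonicity
  have hmono : (∫ s in (0:ℝ)..t, (Ederiv s + kq (M s) (A s) (ew s)))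
      ≤ ∫ s in (0:ℝ)..t, (ρ₀ * kq (M s) (A s) (eu' s) + c * kq (M s) (A s) (eu s)
          + c * (qf (M s) (du s) + qf (M s) (dw s)) + c * qf (M 0) (dw 0)) := by
    apply intervalIntegral.integral_mono_on ht0 (iEd.add iW)
      ((((iU.const_mul ρ₀).add (iP.const_mul c)).add (iD.const_mul c)).add iC)
    intro x hx
    exact key x (h0t hx)
  -- expand both sides
  have hsplitL : (∫ s in (0:ℝ)..t, (Ederiv s + kq (M s) (A s) (ew s)))
      = (∫ s in (0:ℝ)..t, Ederiv s) + ∫ s in (0:ℝ)..t, kq (M s) (A s) (ew s) :=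
    intervalIntegral.integral_add iEd iW
  have hsplitR : (∫ s in (0:ℝ)..t, (ρ₀ * kq (M s) (A s) (eu' s) + c * kq (M s) (A s) (eu s)
          + c * (qf (M s) (du s) + qf (M s) (dw s)) + c * qf (M 0) (dw 0)))
      = ρ₀ * (∫ s in (0:ℝ)..t, kq (M s) (A s) (eu' s))
        + c * (∫ s in (0:ℝ)..t, kq (M s) (A s) (eu s))
        + c * (∫ s in (0:ℝ)..t, (qf (M s) (du s) + qf (M s) (dw s)))
        + t * (c * qf (M 0) (dw 0)) := by
    rw [intervalIntegral.integral_add (((iU.const_mul ρ₀).add (iP.const_mul c)).add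
        (iD.const_mul c)) iC,
      intervalIntegral.integral_add ((iU.const_mul ρ₀).add (iP.const_mul c)) (iD.const_mul c),
      intervalIntegral.integral_add (iU.const_mul ρ₀) (iP.const_mul c),
      intervalIntegral.integral_const_mul, intervalIntegral.integral_const_mul,
      intervalIntegral.integral_const_mul, intervalIntegral.integral_const]
    simp only [sub_zero, smul_eq_mul]
  have hfin : t * (c * qf (M 0) (dw 0)) = c * t * qf (M 0) (dw 0) := by ring
  linarith only [hmono, hsplitL, hsplitR, hFTC, hzero, hfin]
end

section
/- For all t ∈ [0,T] the following energy identity holds: ‖e_u'(t)‖_{M(t)}² + (1/2)·(d/dt)(‖e_w(t)‖_{M(t)}²) = −e_u'(t)ᵀM'(t)e_u(t) − (1/2)·e_w(t)ᵀM'(t)e_w(t) + e_w(t)ᵀA'(t)e_u(t) + e_u'(t)ᵀF(t) + e_w(t)ᵀG'(t) − e_u'(t)ᵀM(t)d_u(t) − e_w(t)ᵀM'(t)d_w(t) − e_w(t)ᵀM(t)d_w'(t). (Obtained by differentiating the second error equation in time, testing the first error equation with e_u' and the differentiated second equation with e_w, and adding; the mixed stiffness terms cancel by symmetry of A(t).)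 -/
open Matrix Set


lemma mulVec_hasDerivAt {N : ℕ} {P : ℝ → Matrix (Fin N) (Fin N) ℝ}
    {P' : Matrix (Fin N) (Fin N) ℝ} {y : ℝ → Fin N → ℝ} {y' : Fin N → ℝ} {t : ℝ}
    (hP : ∀ i j, HasDerivAt (fun s => P s i j) (P' i j) t)
    (hy : HasDerivAt y y' t) :
    HasDerivAt (fun s => (P s).mulVec (y s)) (P'.mulVec (y t) + (P t).mulVec y') t := by
  rw [hasDerivAt_pi]
  intro i
  simp only [Matrix.mulVec, dotProduct, Pi.add_apply]
  have := HasDerivAt.fun_sum (A := fun j s => P s i j * y s j)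
    (A' := fun j => P' i j * y t j + P t i j * y' j) (u := Finset.univ)
    (fun j _ => (hP i j).mul ((hasDerivAt_pi.mp hy) j))
  exact this.congr_deriv (by rw [Finset.sum_add_distrib])

lemma dot_mulVec_hasDerivAt {N : ℕ} {P : ℝ → Matrix (Fin N) (Fin N) ℝ}
    {P' : Matrix (Fin N) (Fin N) ℝ} {x y : ℝ → Fin N → ℝ} {x' y' : Fin N → ℝ} {t : ℝ}
    (hP : ∀ i j, HasDerivAt (fun s => P s i j) (P' i j) t)
    (hx : HasDerivAt x x' t) (hy : HasDerivAt y y' t) :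
    HasDerivAt (fun s => x s ⬝ᵥ (P s).mulVec (y s))
      (x' ⬝ᵥ (P t).mulVec (y t) + x t ⬝ᵥ (P'.mulVec (y t) + (P t).mulVec y')) t := by
  have h := mulVec_hasDerivAt hP hy
  simp only [dotProduct]
  exact (HasDerivAt.fun_sum (fun i _ =>
    ((hasDerivAt_pi.mp hx) i |>.mul ((hasDerivAt_pi.mp h) i)))).congr_deriv (by
      simp [Finset.sum_add_distrib])

lemma dot_symm {N : ℕ} {P : Matrix (Fin N) (Fin N) ℝ} (h : Pᵀ = P) (x y : Fin N → ℝ) :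
    x ⬝ᵥ P.mulVec y = y ⬝ᵥ P.mulVec x := by
  rw [Matrix.dotProduct_mulVec, ← Matrix.mulVec_transpose, h, dotProduct_comm]

/-- Energy identity (ii.a) of the stability proof: differentiating the second error
equation in time, testing the first error equation with `e_u'` and the differentiated
second equation with `e_w`, and adding, gives
`‖e_u'‖_{M(t)}² + (1/2)·(d/dt)(‖e_w‖_{M(t)}²)
  = −e_u'ᵀM'e_u − (1/2)·e_wᵀM'e_w + e_wᵀA'e_u + e_u'ᵀF + e_wᵀG'
    − e_u'ᵀM d_u − e_wᵀM' d_w − e_wᵀM d_w'`. -/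
theorem stmt6 {N : ℕ} (hN : 1 ≤ N) {T : ℝ} (hT : 0 < T)
    (M A M' A' : ℝ → Matrix (Fin N) (Fin N) ℝ)
    (eu ew eu' ew' du dw du' dw' F G F' G' : ℝ → Fin N → ℝ)
    (ϑ : Fin N → ℝ)
    (hyp : CHBasic T M A M' A' eu ew eu' ew' du dw du' dw' F G F' G' ϑ) :
    ∀ t ∈ Icc (0:ℝ) T,
      HasDerivAt (fun s => qf (M s) (ew s))
        (2 * ((-(eu' t ⬝ᵥ (M' t).mulVec (eu t))
              - (1/2) * (ew t ⬝ᵥ (M' t).mulVec (ew t))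
              + ew t ⬝ᵥ (A' t).mulVec (eu t)
              + eu' t ⬝ᵥ F t + ew t ⬝ᵥ G' t
              - eu' t ⬝ᵥ (M t).mulVec (du t)
              - ew t ⬝ᵥ (M' t).mulVec (dw t)
              - ew t ⬝ᵥ (M t).mulVec (dw' t))
            - qf (M t) (eu' t))) t := by
  obtain ⟨hM', hA', _, _, hMpd, hApsd, heu, hew, hdu, hdw, hF, hG,
    _, _, _, _, _, _, heq1, heq2⟩ := hyp
  intro t ht
  have hMsym : (M t)ᵀ = M t := by
    rw [← Matrix.conjTranspose_eq_transpose_of_trivial]; exact (hMpd t ht).isHermitian.eq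
  have hAsym : (A t)ᵀ = A t := by
    rw [← Matrix.conjTranspose_eq_transpose_of_trivial]; exact (hApsd t ht).isHermitian.eq
  have hL : HasDerivAt (fun s => (M s).mulVec (ew s) - (A s).mulVec (eu s))
      ((M' t).mulVec (ew t) + (M t).mulVec (ew' t)
        - ((A' t).mulVec (eu t) + (A t).mulVec (eu' t))) t :=
    (mulVec_hasDerivAt (hM' t ht) (hew t ht)).sub (mulVec_hasDerivAt (hA' t ht) (heu t ht))
  have hR : HasDerivAt (fun s => G s - (M s).mulVec (dw s) + ϑ)
      (G' t - ((M' t).mulVec (dw t) + (M t).mulVec (dw' t))) t := by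
    simpa using ((hG t ht).sub (mulVec_hasDerivAt (hM' t ht) (hdw t ht))).add_const ϑ
  have hRL : HasDerivWithinAt (fun s => G s - (M s).mulVec (dw s) + ϑ)
      ((M' t).mulVec (ew t) + (M t).mulVec (ew' t)
        - ((A' t).mulVec (eu t) + (A t).mulVec (eu' t))) (Icc 0 T) t :=
    hL.hasDerivWithinAt.congr (fun x hx => (heq2 x hx).symm) (heq2 t ht).symm
  have hdiff2 : (M' t).mulVec (ew t) + (M t).mulVec (ew' t)
        - ((A' t).mulVec (eu t) + (A t).mulVec (eu' t))
      = G' t - ((M' t).mulVec (dw t) + (M t).mulVec (dw' t)) :=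
    (uniqueDiffOn_Icc hT t ht).eq_deriv _ hRL hR.hasDerivWithinAt
  have E1 := congrArg (fun v => eu' t ⬝ᵥ v) (heq1 t ht)
  have E2 := congrArg (fun v => ew t ⬝ᵥ v) hdiff2
  simp only [dotProduct_add, dotProduct_sub] at E1 E2
  have hQ := dot_mulVec_hasDerivAt (hM' t ht) (hew t ht) (hew t ht)
  refine HasDerivAt.congr_deriv hQ ?_
  have s1 : ew' t ⬝ᵥ (M t).mulVec (ew t) = ew t ⬝ᵥ (M t).mulVec (ew' t) :=
    dot_symm hMsym _ _
  have s2 : eu' t ⬝ᵥ (A t).mulVec (ew t) = ew t ⬝ᵥ (A t).mulVec (eu' t) :=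
    dot_symm hAsym _ _
  simp only [dotProduct_add, qf]
  linarith [E1, E2]
end
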